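/- For every real t > 0, ∫₀^∞ ((15 t − 27 t³ x⁶) cos(t x³) − (8 + 81 t²) x³ sin(t x³)) e^{−x²} dx = 0. -/

import Mathlib

/-!
The integrand is an exact derivative: with `P x = 15 t x + 6 t x³` and
`Q x = 4 + 4 x² - 9 t² x⁴`, it equals `F'` for
`F x = (P x cos (t x³) + Q x sin (t x³)) e^{-x²}`. Since `F 0 = 0` and the Gaussian
factor forces `F x → 0` as `x → ∞`, the integral is `F ∞ - F 0 = 0`.
-/

open MeasureTheory Real Filter Set Topology

lemma integrable_pow_mul_exp_neg_sq (n : ℕ) :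
    Integrable fun x : ℝ => x ^ n * exp (-x ^ 2) := by
  simpa [rpow_natCast] using
    integrable_rpow_mul_exp_neg_mul_sq one_pos (neg_one_lt_zero.trans_le n.cast_nonneg)

lemma tendsto_pow_mul_exp_neg_sq_atTop (n : ℕ) :
    Tendsto (fun x : ℝ => x ^ n * exp (-x ^ 2)) atTop (𝓝 0) := by
  refine ((tendsto_rpow_abs_mul_exp_neg_mul_sq_cocompact one_pos n).mono_left
    atTop_le_cocompact).congr' ?_
  filter_upwards [eventually_ge_atTop 0] with x hx
  simp [abs_of_nonneg hx, rpow_natCast]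

section BoundedFactor

variable {h : ℝ → ℝ} {C : ℝ}

lemma integrable_pow_mul_exp_neg_sq_mul (hm : AEStronglyMeasurable h) (hb : ∀ x, |h x| ≤ C)
    (n : ℕ) : Integrable fun x : ℝ => x ^ n * exp (-x ^ 2) * h x :=
  (integrable_pow_mul_exp_neg_sq n).mul_bdd hm
    (.of_forall fun x => (norm_eq_abs _).trans_le (hb x))

lemma tendsto_pow_mul_exp_neg_sq_mul_atTop (hb : ∀ x, |h x| ≤ C) (n : ℕ) :
    Tendsto (fun x : ℝ => x ^ n * exp (-x ^ 2) * h x) atTop (𝓝 0) :=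
  (tendsto_pow_mul_exp_neg_sq_atTop n).zero_mul_isBoundedUnder_le
    (isBoundedUnder_of ⟨C, fun x => (norm_eq_abs _).trans_le (hb x)⟩)

end BoundedFactor

noncomputable def odeIntegrand (t x : ℝ) : ℝ :=
  ((15 * t - 27 * t ^ 3 * x ^ 6) * cos (t * x ^ 3) -
    (8 + 81 * t ^ 2) * x ^ 3 * sin (t * x ^ 3)) * exp (-x ^ 2)

noncomputable def odeAntideriv (t x : ℝ) : ℝ :=
  ((15 * t * x + 6 * t * x ^ 3) * cos (t * x ^ 3) +
    (4 + 4 * x ^ 2 - 9 * t ^ 2 * x ^ 4) * sin (t * x ^ 3)) * exp (-x ^ 2)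

lemma hasDerivAt_odeAntideriv (t x : ℝ) :
    HasDerivAt (odeAntideriv t) (odeIntegrand t x) x := by
  have hphase := (hasDerivAt_pow 3 x).const_mul t
  have hP := ((hasDerivAt_id' x).const_mul (15 * t)).add ((hasDerivAt_pow 3 x).const_mul (6 * t))
  have hQ := (((hasDerivAt_pow 2 x).const_mul 4).const_add 4).sub
    ((hasDerivAt_pow 4 x).const_mul (9 * t ^ 2))
  have hgauss := (hasDerivAt_pow 2 x).neg.exp
  refine (((hP.mul hphase.cos).add (hQ.mul hphase.sin)).mul hgauss).congr_deriv ?_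
  simp only [odeIntegrand, Pi.add_apply, Pi.sub_apply, Pi.mul_apply, Pi.neg_apply]
  ring

lemma integrable_odeIntegrand (t : ℝ) : Integrable (odeIntegrand t) := by
  have hcos := integrable_pow_mul_exp_neg_sq_mul (h := fun x => cos (t * x ^ 3))
    (by fun_prop) (fun x => abs_cos_le_one _)
  have hsin := integrable_pow_mul_exp_neg_sq_mul (h := fun x => sin (t * x ^ 3))
    (by fun_prop) (fun x => abs_sin_le_one _)
  refine ((((hcos 0).const_mul (15 * t)).sub ((hcos 6).const_mul (27 * t ^ 3))).sub
    ((hsin 3).const_mul (8 + 81 * t ^ 2))).congr (.of_forall fun x => ?_)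
  simp only [odeIntegrand, Pi.sub_apply]
  ring

lemma tendsto_odeAntideriv_atTop (t : ℝ) : Tendsto (odeAntideriv t) atTop (𝓝 0) := by
  have hcos := tendsto_pow_mul_exp_neg_sq_mul_atTop (h := fun x => cos (t * x ^ 3))
    (fun x => abs_cos_le_one _)
  have hsin := tendsto_pow_mul_exp_neg_sq_mul_atTop (h := fun x => sin (t * x ^ 3))
    (fun x => abs_sin_le_one _)
  have hsum := (((((hcos 1).const_mul (15 * t)).add ((hcos 3).const_mul (6 * t))).add
    ((hsin 0).const_mul 4)).add ((hsin 2).const_mul 4)).sub ((hsin 4).const_mul (9 * t ^ 2))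
  simpa using hsum.congr fun x => by simp only [odeAntideriv]; ring

theorem integral_ode_combination_eq_zero_general (t : ℝ) :
    ∫ x in Set.Ioi (0 : ℝ),
        ((15 * t - 27 * t ^ 3 * x ^ 6) * Real.cos (t * x ^ 3) -
          (8 + 81 * t ^ 2) * x ^ 3 * Real.sin (t * x ^ 3)) * Real.exp (-x ^ 2) = 0 := by
  have hFTC := integral_Ioi_of_hasDerivAt_of_tendsto
    (hasDerivAt_odeAntideriv t 0).continuousAt.continuousWithinAt
    (fun x _ => hasDerivAt_odeAntideriv t x) (integrable_odeIntegrand t).integrableOn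
    (tendsto_odeAntideriv_atTop t)
  exact hFTC.trans (by simp [odeAntideriv])

/-- For every `t > 0`,
`∫₀^∞ ((15t - 27t³x⁶) cos(tx³) - (8 + 81t²) x³ sin(tx³)) e^{-x²} dx = 0`. -/
theorem integral_ode_combination_eq_zero (t : ℝ) (ht : 0 < t) :
    ∫ x in Set.Ioi (0 : ℝ),
        ((15 * t - 27 * t ^ 3 * x ^ 6) * Real.cos (t * x ^ 3) -
          (8 + 81 * t ^ 2) * x ^ 3 * Real.sin (t * x ^ 3)) * Real.exp (-x ^ 2) = 0 :=
  integral_ode_combination_eq_zero_general t
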